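/- arXiv:1410.5014 — 3 statements merged into one kernel-verified Lean document; each statement's English description precedes it below -/
import Mathlib

section
/- Let Ŝ¹,...,Ŝʳ ⊆ {1,...,p} be sets ordered so that |Ŝ¹| ≤ ... ≤ |Ŝʳ|, let S ⊆ {1,...,p}, and suppose the oracle index v = min{i : Ŝⁱ ⊇ S} exists. Let β̄^{i,j} denote least-squares estimators on the unions Ŝ^{i,j} = Ŝⁱ ∪ Ŝʲ (with β̄^i = β̄^{i,i}). Assume there are constants b, c > 0 and an event Ω of probability at least 1−b on which, simultaneously for all i,j ∈ [r], ‖X β̄^{i,j} − X β‖₂² ≤ c|Ŝ^{i,j}| + ‖(I − P_{Ŝ^{i,j}}) X β‖₂², where supp(β) = S. Define î = min{ i ∈ [r−1] : ‖X β̄^i − X β̄^{i,j}‖₂² ≤ a|Ŝⁱ| + a|Ŝ^{i,j}| for all j with |Ŝʲ| ≥ |Ŝⁱ| } (and î = r if no such i exists), where a ≥ 2c. Then on Ω, î ≤ v. -/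
open Matrix Finset

/-- Claim (i) of the AV_p optimality theorem: on the event where the prediction
bounds hold, the AV_p selected index `î` satisfies `î ≤ v`, the oracle index.
Here `S i` are the candidate active sets ordered by cardinality, `P T` is the
orthogonal projection onto the column span of `X_T` (so it fixes `Xβ` whenever
`T ⊇ supp β`), `βb i j` is the least-squares estimator on `S i ∪ S j`
(`βb i i = β̄^i`), `v` is the minimal index with `S v ⊇ supp β`, `a ≥ 2c`, and
`î` is minimal among indices passing all tests (so every `i < î` fails some test). -/
theorem avp_selected_le_oracle (n p r : ℕ) (X : Matrix (Fin n) (Fin p) ℝ)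
    (β : Fin p → ℝ) (ε Y : Fin n → ℝ)
    (hY : Y = X.mulVec β + ε)
    (S : Fin r → Finset (Fin p))
    (hord : ∀ i j : Fin r, i ≤ j → (S i).card ≤ (S j).card)
    (P : Finset (Fin p) → Matrix (Fin n) (Fin n) ℝ)
    (hP : ∀ T : Finset (Fin p), (∀ k, β k ≠ 0 → k ∈ T) →
      (P T).mulVec (X.mulVec β) = X.mulVec β)
    (βb : Fin r → Fin r → (Fin p → ℝ))
    (a c b : ℝ) (hb : 0 < b) (hc : 0 < c) (ha : 2 * c ≤ a)
    (hbound : ∀ i j : Fin r,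
      ∑ k, (X.mulVec (βb i j) k - X.mulVec β k) ^ 2
        ≤ c * ((S i ∪ S j).card : ℝ)
          + ∑ k, (((1 - P (S i ∪ S j)).mulVec (X.mulVec β)) k) ^ 2)
    (v : Fin r)
    (hvS : ∀ k, β k ≠ 0 → k ∈ S v)
    (hvmin : ∀ i : Fin r, (∀ k, β k ≠ 0 → k ∈ S i) → v ≤ i)
    (ihat : Fin r)
    (hmin : ∀ i : Fin r, i < ihat →
      ¬ (∀ j : Fin r, (S i).card ≤ (S j).card →
        ∑ k, (X.mulVec (βb i i) k - X.mulVec (βb i j) k) ^ 2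
          ≤ a * ((S i).card : ℝ) + a * ((S i ∪ S j).card : ℝ))) :
    ihat ≤ v := by
  by_contra h
  push_neg at h
  apply hmin v h
  intro j hj
  have hres : ∀ T : Finset (Fin p), (∀ k, β k ≠ 0 → k ∈ T) →
      ∑ k, (((1 - P T).mulVec (X.mulVec β)) k) ^ 2 = 0 := by
    intro T hT
    have : (1 - P T).mulVec (X.mulVec β) = 0 := by
      rw [sub_mulVec, one_mulVec, hP T hT, sub_self]
    simp [this]
  have hvv := hbound v v
  have hvj := hbound v j
  rw [hres _ (by intro k hk; exact Finset.mem_union_left _ (hvS k hk)), add_zero] at hvj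
  rw [hres _ (by intro k hk; exact Finset.mem_union_left _ (hvS k hk)), add_zero,
    Finset.union_self] at hvv
  have key : ∑ k, (X.mulVec (βb v v) k - X.mulVec (βb v j) k) ^ 2
      ≤ 2 * ∑ k, (X.mulVec (βb v v) k - X.mulVec β k) ^ 2
        + 2 * ∑ k, (X.mulVec (βb v j) k - X.mulVec β k) ^ 2 := by
    rw [Finset.mul_sum, Finset.mul_sum, ← Finset.sum_add_distrib]
    apply Finset.sum_le_sum
    intro k _
    nlinarith [sq_nonneg (X.mulVec (βb v v) k + X.mulVec (βb v j) k - 2 * X.mulVec β k)]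
  have hcard : ((S v).card : ℝ) ≤ ((S v ∪ S j).card : ℝ) := by
    exact_mod_cast Finset.card_le_card (Finset.subset_union_left)
  have h0 : (0:ℝ) ≤ ((S v).card : ℝ) := Nat.cast_nonneg _
  nlinarith
end

section
/- Under the assumptions of the AV_p optimality setup (prediction bounds holding on an event Ω with a ≥ 2c, oracle index v with oracle set S̃ = Ŝᵛ ⊇ S = supp(β)), the selected estimator β̄ = β̄^{î} satisfies on Ω: ‖X β̄ − X β‖₂² ≤ (6a + 4c)|S̃|. -/
open Matrix Finset

/-- Claim (ii) of the AV_p optimality theorem: on the event where the prediction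
bounds hold, the AV_p selected estimator `β̄ = βb î î` satisfies
`‖Xβ̄ − Xβ‖₂² ≤ (6a + 4c)|S̃|`, where `S̃ = S v` is the oracle set.
`î` is characterized by: every `i < î` fails some test (`hmin`), and either `î`
itself passes all its tests, or `î` is the last index (`hsel`). -/
theorem avp_prediction_optimal (n p r : ℕ) (X : Matrix (Fin n) (Fin p) ℝ)
    (β : Fin p → ℝ) (ε Y : Fin n → ℝ)
    (hY : Y = X.mulVec β + ε)
    (S : Fin r → Finset (Fin p))
    (hord : ∀ i j : Fin r, i ≤ j → (S i).card ≤ (S j).card)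
    (P : Finset (Fin p) → Matrix (Fin n) (Fin n) ℝ)
    (hP : ∀ T : Finset (Fin p), (∀ k, β k ≠ 0 → k ∈ T) →
      (P T).mulVec (X.mulVec β) = X.mulVec β)
    (βb : Fin r → Fin r → (Fin p → ℝ))
    (a c b : ℝ) (hb : 0 < b) (hc : 0 < c) (ha : 2 * c ≤ a)
    (hbound : ∀ i j : Fin r,
      ∑ k, (X.mulVec (βb i j) k - X.mulVec β k) ^ 2
        ≤ c * ((S i ∪ S j).card : ℝ)
          + ∑ k, (((1 - P (S i ∪ S j)).mulVec (X.mulVec β)) k) ^ 2)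
    (v : Fin r)
    (hvS : ∀ k, β k ≠ 0 → k ∈ S v)
    (hvmin : ∀ i : Fin r, (∀ k, β k ≠ 0 → k ∈ S i) → v ≤ i)
    (ihat : Fin r)
    (hmin : ∀ i : Fin r, i < ihat →
      ¬ (∀ j : Fin r, (S i).card ≤ (S j).card →
        ∑ k, (X.mulVec (βb i i) k - X.mulVec (βb i j) k) ^ 2
          ≤ a * ((S i).card : ℝ) + a * ((S i ∪ S j).card : ℝ)))
    (hsel : (∀ j : Fin r, (S ihat).card ≤ (S j).card →
        ∑ k, (X.mulVec (βb ihat ihat) k - X.mulVec (βb ihat j) k) ^ 2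
          ≤ a * ((S ihat).card : ℝ) + a * ((S ihat ∪ S j).card : ℝ))
      ∨ (∀ i : Fin r, i ≤ ihat)) :
    ∑ k, (X.mulVec (βb ihat ihat) k - X.mulVec β k) ^ 2
      ≤ (6 * a + 4 * c) * ((S v).card : ℝ) := by
  have ha0 : 0 < a := lt_of_lt_of_le (by linarith) ha
  have hres : ∀ T : Finset (Fin p), (∀ k, β k ≠ 0 → k ∈ T) →
      ∑ k, (((1 - P T).mulVec (X.mulVec β)) k) ^ 2 = 0 := by
    intro T hT
    have h0 : (1 - P T).mulVec (X.mulVec β) = 0 := by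
      rw [Matrix.sub_mulVec, Matrix.one_mulVec, hP T hT, sub_self]
    simp [h0]
  have hbv : ∀ i : Fin r, ∑ k, (X.mulVec (βb i v) k - X.mulVec β k) ^ 2
      ≤ c * ((S i ∪ S v).card : ℝ) := by
    intro i
    have h := hbound i v
    rwa [hres _ (fun k hk => Finset.mem_union_right _ (hvS k hk)), add_zero] at h
  have htri : ∀ u w z : Fin n → ℝ,
      ∑ k, (u k - w k) ^ 2 ≤ 2 * ∑ k, (u k - z k) ^ 2 + 2 * ∑ k, (w k - z k) ^ 2 := by
    intro u w z
    rw [Finset.mul_sum, Finset.mul_sum, ← Finset.sum_add_distrib]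
    refine Finset.sum_le_sum fun k _ => ?_
    nlinarith [sq_nonneg (u k + w k - 2 * z k)]
  have hvv : ∑ k, (X.mulVec (βb v v) k - X.mulVec β k) ^ 2 ≤ c * ((S v).card : ℝ) := by
    have h := hbound v v
    rw [Finset.union_self] at h
    rwa [hres _ hvS, add_zero] at h
  have hiv : ihat ≤ v := by
    by_contra h
    push_neg at h
    apply hmin v h
    intro j hj
    have h2 : ∑ k, (X.mulVec (βb v j) k - X.mulVec β k) ^ 2
        ≤ c * ((S v ∪ S j).card : ℝ) := by
      have h := hbound v j
      rwa [hres _ (fun k hk => Finset.mem_union_left _ (hvS k hk)), add_zero] at h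
    have h5 := htri (X.mulVec (βb v v)) (X.mulVec (βb v j)) (X.mulVec β)
    have hcu : (0:ℝ) ≤ ((S v ∪ S j).card : ℝ) := Nat.cast_nonneg _
    have hcv : (0:ℝ) ≤ ((S v).card : ℝ) := Nat.cast_nonneg _
    nlinarith [h5, hvv, h2]
  have hcard : ((S ihat).card : ℝ) ≤ ((S v).card : ℝ) := by
    exact_mod_cast hord _ _ hiv
  have hcardu : ((S ihat ∪ S v).card : ℝ) ≤ ((S ihat).card : ℝ) + ((S v).card : ℝ) := by
    exact_mod_cast Finset.card_union_le (S ihat) (S v)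
  rcases hsel with htest | hlast
  · have h3 := htest v (hord _ _ hiv)
    have h4 := hbv ihat
    have h5 := htri (X.mulVec (βb ihat ihat)) (X.mulVec β) (X.mulVec (βb ihat v))
    have heq : ∑ k, (X.mulVec β k - X.mulVec (βb ihat v) k) ^ 2
        = ∑ k, (X.mulVec (βb ihat v) k - X.mulVec β k) ^ 2 := by
      exact Finset.sum_congr rfl fun k _ => by ring
    rw [heq] at h5
    have hcv : (0:ℝ) ≤ ((S v).card : ℝ) := Nat.cast_nonneg _
    nlinarith [h3, h4, h5]
  · have : ihat = v := le_antisymm hiv (hlast v)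
    subst this
    have hcv : (0:ℝ) ≤ ((S ihat).card : ℝ) := Nat.cast_nonneg _
    nlinarith [hvv]
end

section
/- Let X = ∩_{j∈J} H_j^+ ⊆ ℝⁿ be a polyhedron of full dimension n given by an irreducible decomposition into closed half-spaces H_j^+ with boundary hyperplanes H_j. Fix an index i, let F_i = X ∩ H_i be the corresponding facet, and let x ∈ relint F_i. Then there exists ε > 0 such that int(H_i^+) ∩ B(x,ε) ⊆ int X, H_i ∩ B(x,ε) ⊆ F_i, and (H_i^+)^c ∩ B(x,ε) ⊆ X^c. -/
open scoped RealInnerProductSpace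

lemma interior_halfspace' {E : Type*} [NormedAddCommGroup E] [InnerProductSpace ℝ E]
    [CompleteSpace E] (a : E) (ha : a ≠ 0) (b : ℝ) :
    interior {y : E | ⟪a, y⟫ ≤ b} = {y : E | ⟪a, y⟫ < b} := by
  have hsurj : Function.Surjective (innerSL ℝ a) := by
    intro r
    refine ⟨(r / ‖a‖ ^ 2) • a, ?_⟩
    simp [inner_smul_right, real_inner_self_eq_norm_sq]
    field_simp
  have : {y : E | ⟪a, y⟫ ≤ b} = (innerSL ℝ a) ⁻¹' Set.Iic b := rfl
  rw [this, ContinuousLinearMap.interior_preimage _ hsurj, interior_Iic]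
  rfl


/-- Proposition A.2: Let `X = ⋂ⱼ Hⱼ⁺` be a full-dimensional polyhedron given by
an irreducible decomposition into closed half-spaces, `Fᵢ = X ∩ Hᵢ` a facet, and
`x` a point of the relative interior of `Fᵢ`.  Then there is `ε > 0` with
`int(Hᵢ⁺) ∩ B(x,ε) ⊆ int X`, `Hᵢ ∩ B(x,ε) ⊆ Fᵢ` and `(Hᵢ⁺)ᶜ ∩ B(x,ε) ⊆ Xᶜ`. -/
theorem facet_local_structure (n m : ℕ)
    (a : Fin m → EuclideanSpace ℝ (Fin n)) (b : Fin m → ℝ)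
    (ha : ∀ j, a j ≠ 0)
    (Xs : Set (EuclideanSpace ℝ (Fin n)))
    (hXs : Xs = ⋂ j, {x : EuclideanSpace ℝ (Fin n) | ⟪a j, x⟫ ≤ b j})
    (hfull : (interior Xs).Nonempty)
    (hirr : ∀ j : Fin m,
      (⋂ k ∈ ({j}ᶜ : Set (Fin m)), {x : EuclideanSpace ℝ (Fin n) | ⟪a k, x⟫ ≤ b k}) ≠ Xs)
    (i : Fin m) (x : EuclideanSpace ℝ (Fin n))
    (hx : x ∈ intrinsicInterior ℝ (Xs ∩ {y : EuclideanSpace ℝ (Fin n) | ⟪a i, y⟫ = b i})) :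
    ∃ ε > 0,
      interior {y : EuclideanSpace ℝ (Fin n) | ⟪a i, y⟫ ≤ b i} ∩ Metric.ball x ε
          ⊆ interior Xs
      ∧ {y : EuclideanSpace ℝ (Fin n) | ⟪a i, y⟫ = b i} ∩ Metric.ball x ε
          ⊆ Xs ∩ {y : EuclideanSpace ℝ (Fin n) | ⟪a i, y⟫ = b i}
      ∧ {y : EuclideanSpace ℝ (Fin n) | ⟪a i, y⟫ ≤ b i}ᶜ ∩ Metric.ball x ε ⊆ Xsᶜ := by
  set F : Set (EuclideanSpace ℝ (Fin n)) :=
    Xs ∩ {y : EuclideanSpace ℝ (Fin n) | ⟪a i, y⟫ = b i} with hF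
  have hXsub : ∀ k, Xs ⊆ {y : EuclideanSpace ℝ (Fin n) | ⟪a k, y⟫ ≤ b k} := by
    rw [hXs]; exact fun k => Set.iInter_subset _ k
  have hmemXs : ∀ y, (∀ k, ⟪a k, y⟫ ≤ b k) → y ∈ Xs := by
    intro y hy; rw [hXs]; exact Set.mem_iInter.mpr hy
  -- interior point with all strict inequalities
  obtain ⟨w, hw⟩ := hfull
  have hwlt : ∀ k, ⟪a k, w⟫ < b k := by
    intro k
    have := interior_mono (hXsub k) hw
    rwa [interior_halfspace' _ (ha k)] at this
  -- point violating only constraint i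
  obtain ⟨z, hz1, hz2⟩ : ∃ z, (∀ k, k ≠ i → ⟪a k, z⟫ ≤ b k) ∧ b i < ⟪a i, z⟫ := by
    have hsub : Xs ⊆ ⋂ k ∈ ({i}ᶜ : Set (Fin m)),
        {x : EuclideanSpace ℝ (Fin n) | ⟪a k, x⟫ ≤ b k} := by
      intro y hy
      simp only [Set.mem_iInter]
      exact fun k _ => hXsub k hy
    have hne := hirr i
    have : ¬ (⋂ k ∈ ({i}ᶜ : Set (Fin m)),
        {x : EuclideanSpace ℝ (Fin n) | ⟪a k, x⟫ ≤ b k}) ⊆ Xs := fun h =>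
      hne (Set.Subset.antisymm h hsub)
    obtain ⟨z, hz1, hz2⟩ := Set.not_subset.mp this
    simp only [Set.mem_iInter] at hz1
    refine ⟨z, fun k hk => hz1 k hk, ?_⟩
    by_contra hle
    exact hz2 (hmemXs z fun k => by
      by_cases hk : k = i
      · subst hk; exact le_of_not_gt hle
      · exact hz1 k hk)
  -- point q on the facet with all other constraints strict
  have hd : 0 < ⟪a i, z⟫ - ⟪a i, w⟫ := by linarith [hwlt i]
  set t : ℝ := (b i - ⟪a i, w⟫) / (⟪a i, z⟫ - ⟪a i, w⟫) with ht
  have ht0 : 0 < t := div_pos (by linarith [hwlt i]) hd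
  have ht1 : t < 1 := (div_lt_one hd).mpr (by linarith [hwlt i])
  set q : EuclideanSpace ℝ (Fin n) := w + t • (z - w) with hq
  have hinq : ∀ k, ⟪a k, q⟫ = ⟪a k, w⟫ + t * (⟪a k, z⟫ - ⟪a k, w⟫) := by
    intro k; simp [hq, inner_add_right, inner_smul_right, inner_sub_right]
  have hqi : ⟪a i, q⟫ = b i := by
    have : t * (⟪a i, z⟫ - ⟪a i, w⟫) = b i - ⟪a i, w⟫ := div_mul_cancel₀ _ hd.ne'
    rw [hinq i, this]; ring
  have hqk : ∀ k, k ≠ i → ⟪a k, q⟫ < b k := by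
    intro k hk
    have h1 := hz1 k hk
    have h2 := hwlt k
    rw [hinq k]
    nlinarith
  have hqF : q ∈ F := by
    refine ⟨hmemXs q fun k => ?_, hqi⟩
    by_cases hk : k = i
    · subst hk; exact le_of_eq hqi
    · exact (hqk k hk).le
  have hxF : x ∈ F := intrinsicInterior_subset hx
  -- key strictness at x
  have hstrict : ∀ j, j ≠ i → ⟪a j, x⟫ < b j := by
    intro j hj
    have hle : ⟪a j, x⟫ ≤ b j := hXsub j hxF.1
    rcases lt_or_eq_of_le hle with h | h
    · exact h
    exfalso
    -- x lies on H_j; move from x away from q inside the affine span of F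
    obtain ⟨y, hy, hyx⟩ := mem_intrinsicInterior.mp hx
    obtain ⟨ε, hε, hball⟩ := Metric.mem_nhds_iff.mp (mem_interior_iff_mem_nhds.mp hy)
    set s : ℝ := ε / (2 * (‖x - q‖ + 1)) with hs
    have hden : (0:ℝ) < ‖x - q‖ + 1 := by positivity
    have hs0 : 0 < s := by positivity
    set p : EuclideanSpace ℝ (Fin n) := s • (x - q) + x with hp
    have hpspan : p ∈ affineSpan ℝ F := by
      have h1 : x ∈ affineSpan ℝ F := subset_affineSpan ℝ F hxF
      have h2 : q ∈ affineSpan ℝ F := subset_affineSpan ℝ F hqF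
      have := AffineSubspace.smul_vsub_vadd_mem (affineSpan ℝ F) s h1 h2 h1
      simpa [vsub_eq_sub] using this
    have hdist : dist (⟨p, hpspan⟩ : affineSpan ℝ F) y < ε := by
      rw [Subtype.dist_eq, hyx]
      have : dist p x = s * ‖x - q‖ := by
        rw [dist_eq_norm]
        simp [hp, norm_smul, abs_of_pos hs0]
      rw [this, hs]
      have h1 : ‖x - q‖ < ‖x - q‖ + 1 := by linarith
      calc ε / (2 * (‖x - q‖ + 1)) * ‖x - q‖
          ≤ ε / (2 * (‖x - q‖ + 1)) * (‖x - q‖ + 1) := by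
            apply mul_le_mul_of_nonneg_left h1.le (by positivity)
        _ = ε / 2 := by field_simp
        _ < ε := by linarith
    have hpF : p ∈ F := hball (Metric.mem_ball.mpr hdist)
    have : ⟪a j, p⟫ ≤ b j := hXsub j hpF.1
    have hip : ⟪a j, p⟫ = b j + s * (b j - ⟪a j, q⟫) := by
      simp [hp, inner_add_right, inner_smul_right, inner_sub_right, h]
      ring
    have hq' := hqk j hj
    nlinarith
  -- choose ε making all constraints j ≠ i strict on the ball
  have hcont : ∀ k : Fin m, Continuous fun y : EuclideanSpace ℝ (Fin n) => ⟪a k, y⟫ :=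
    fun k => Continuous.inner continuous_const continuous_id
  set U : Set (EuclideanSpace ℝ (Fin n)) :=
    ⋂ j : {k : Fin m // k ≠ i}, {y | ⟪a j.1, y⟫ < b j.1} with hUdef
  have hUopen : IsOpen U :=
    isOpen_iInter_of_finite fun j => isOpen_lt (hcont j.1) continuous_const
  have hxU : x ∈ U := Set.mem_iInter.mpr fun j => hstrict j.1 j.2
  obtain ⟨ε, hε, hballU⟩ := Metric.isOpen_iff.mp hUopen x hxU
  refine ⟨ε, hε, ?_, ?_, ?_⟩
  · rintro y ⟨hy1, hy2⟩
    rw [interior_halfspace' _ (ha i)] at hy1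
    have hyU := hballU hy2
    have hmem : y ∈ ⋂ j, {y : EuclideanSpace ℝ (Fin n) | ⟪a j, y⟫ < b j} :=
      Set.mem_iInter.mpr fun j => by
        by_cases hj : j = i
        · subst hj; exact hy1
        · exact Set.mem_iInter.mp hyU ⟨j, hj⟩
    refine interior_maximal (fun y' hy' => hmemXs y' fun k => (Set.mem_iInter.mp hy' k).le)
      (isOpen_iInter_of_finite fun j => isOpen_lt (hcont j) continuous_const) hmem
  · rintro y ⟨hy1, hy2⟩
    have hyU := hballU hy2
    refine ⟨hmemXs y fun k => ?_, hy1⟩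
    by_cases hk : k = i
    · subst hk; exact le_of_eq hy1
    · exact (Set.mem_iInter.mp hyU ⟨k, hk⟩).le
  · rintro y ⟨hy1, _⟩ hyXs
    exact hy1 (hXsub i hyXs)
end
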